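/- Let y be a Gaussian random variable with mean μ and variance σ², σ > 0, let a ∈ ℝ be the failure threshold, and let δ > 0. Define z = (a − μ)/σ, z⁺ = (a + δ − μ)/σ, and z⁻ = (a − δ − μ)/σ, and let Φ and φ denote the standard normal cumulative distribution function and density, respectively. Then the expected improvement E[max(δ − |y − a|, 0)] equals δ·(Φ(z⁺) − Φ(z⁻)) − σ·(2φ(z) − φ(z⁻) − φ(z⁺)) + (μ − a)·(2Φ(z) − Φ(z⁻) − Φ(z⁺)). -/

import Mathlib

/-!
Writing `y = σ u + m` with `u` standard normal, the improvement becomes `σ` times the tent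
function `max (r - |u - z|) 0` of half-width `r = δ / σ` centred at `z`. The tent is affine on
`[z - r, z]` and on `[z, z + r]`, and the standard normal density `φ` satisfies `φ' = -u φ`, so
on each piece the integral against `φ` is explicit in `Φ` and `φ`.
-/

open MeasureTheory ProbabilityTheory Real

/-- The standard normal probability density function. -/
noncomputable def stdNormalPDF (t : ℝ) : ℝ :=
  (1 / Real.sqrt (2 * Real.pi)) * Real.exp (-t ^ 2 / 2)

/-- The standard normal cumulative distribution function. -/
noncomputable def stdNormalCDF (t : ℝ) : ℝ :=
  ∫ u in Set.Iic t, stdNormalPDF u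

lemma gaussianPDFReal_zero_one : gaussianPDFReal 0 1 = stdNormalPDF := by
  ext u
  simp [gaussianPDFReal, stdNormalPDF]

@[fun_prop]
lemma continuous_stdNormalPDF : Continuous stdNormalPDF := by
  unfold stdNormalPDF; fun_prop

lemma integrable_stdNormalPDF : Integrable stdNormalPDF := by
  rw [← gaussianPDFReal_zero_one]
  exact integrable_gaussianPDFReal 0 1

lemma hasDerivAt_stdNormalPDF (x : ℝ) :
    HasDerivAt stdNormalPDF (-x * stdNormalPDF x) x := by
  have hexp : HasDerivAt (fun t : ℝ => -t ^ 2 / 2) (-x) x :=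
    ((hasDerivAt_pow 2 x).neg.div_const 2).congr_deriv (by push_cast; ring)
  exact (hexp.exp.const_mul (1 / Real.sqrt (2 * Real.pi))).congr_deriv
    (by unfold stdNormalPDF; ring)

lemma intervalIntegral_stdNormalPDF (c d : ℝ) :
    ∫ u in c..d, stdNormalPDF u = stdNormalCDF d - stdNormalCDF c :=
  (intervalIntegral.integral_Iic_sub_Iic integrable_stdNormalPDF.integrableOn
    integrable_stdNormalPDF.integrableOn).symm

lemma intervalIntegral_mul_stdNormalPDF (c d : ℝ) :
    ∫ u in c..d, u * stdNormalPDF u = stdNormalPDF c - stdNormalPDF d := by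
  have hderiv (t : ℝ) : HasDerivAt (fun t => -stdNormalPDF t) (t * stdNormalPDF t) t :=
    (hasDerivAt_stdNormalPDF t).neg.congr_deriv (by ring)
  rw [intervalIntegral.integral_eq_sub_of_hasDerivAt (fun t _ => hderiv t)
    (by apply Continuous.intervalIntegrable; fun_prop)]
  ring

lemma intervalIntegral_affine_mul_stdNormalPDF (α β c d : ℝ) :
    ∫ u in c..d, (α + β * u) * stdNormalPDF u
      = α * (stdNormalCDF d - stdNormalCDF c) + β * (stdNormalPDF c - stdNormalPDF d) := by
  simp_rw [add_mul, mul_assoc]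
  rw [intervalIntegral.integral_add (by apply Continuous.intervalIntegrable; fun_prop)
      (by apply Continuous.intervalIntegrable; fun_prop),
    intervalIntegral.integral_const_mul, intervalIntegral.integral_const_mul,
    intervalIntegral_stdNormalPDF, intervalIntegral_mul_stdNormalPDF]

lemma integral_tent_mul_stdNormalPDF (c r : ℝ) (hr : 0 ≤ r) :
    ∫ u, stdNormalPDF u * max (r - |u - c|) 0
      = r * (stdNormalCDF (c + r) - stdNormalCDF (c - r))
        - (2 * stdNormalPDF c - stdNormalPDF (c - r) - stdNormalPDF (c + r))
        - c * (2 * stdNormalCDF c - stdNormalCDF (c - r) - stdNormalCDF (c + r)) := by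
  have hsupp : ∀ u ∉ Set.Icc (c - r) (c + r), stdNormalPDF u * max (r - |u - c|) 0 = 0 := by
    intro u hu
    have hfar : r ≤ |u - c| := by
      by_contra! h
      exact hu ⟨by linarith [neg_abs_le (u - c)], by linarith [le_abs_self (u - c)]⟩
    rw [max_eq_right (by linarith), mul_zero]
  have hintegrable (s t : ℝ) : IntervalIntegrable (fun u => stdNormalPDF u * max (r - |u - c|) 0)
      volume s t := by
    apply Continuous.intervalIntegrable; fun_prop
  have hleft : ∫ u in (c - r)..c, stdNormalPDF u * max (r - |u - c|) 0
      = ∫ u in (c - r)..c, ((r - c) + 1 * u) * stdNormalPDF u := by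
    refine intervalIntegral.integral_congr fun u hu => ?_
    rw [Set.uIcc_of_le (by linarith)] at hu
    rw [abs_of_nonpos (by linarith [hu.2]), max_eq_left (by linarith [hu.1])]
    ring
  have hright : ∫ u in c..(c + r), stdNormalPDF u * max (r - |u - c|) 0
      = ∫ u in c..(c + r), ((r + c) + (-1) * u) * stdNormalPDF u := by
    refine intervalIntegral.integral_congr fun u hu => ?_
    rw [Set.uIcc_of_le (by linarith)] at hu
    rw [abs_of_nonneg (by linarith [hu.1]), max_eq_left (by linarith [hu.2])]
    ring
  rw [← setIntegral_eq_integral_of_forall_compl_eq_zero hsupp, integral_Icc_eq_integral_Ioc,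
    ← intervalIntegral.integral_of_le (by linarith),
    ← intervalIntegral.integral_add_adjacent_intervals (hintegrable _ c) (hintegrable c _),
    hleft, hright, intervalIntegral_affine_mul_stdNormalPDF,
    intervalIntegral_affine_mul_stdNormalPDF]
  ring

lemma gaussianReal_eq_map_stdGaussian (m σ : ℝ) :
    gaussianReal m (Real.toNNReal (σ ^ 2)) = (gaussianReal 0 1).map (fun u => σ * u + m) := by
  have hcomp : (fun u : ℝ => σ * u + m) = (· + m) ∘ (σ * ·) := rfl
  rw [hcomp, ← Measure.map_map (by fun_prop) (by fun_prop), gaussianReal_map_const_mul,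
    gaussianReal_map_add_const, mul_zero, zero_add, mul_one]
  congr
  ext
  simp [sq_nonneg]

lemma integral_stdGaussian (f : ℝ → ℝ) :
    ∫ u, f u ∂(gaussianReal 0 1) = ∫ u, stdNormalPDF u * f u := by
  simp [integral_gaussianReal_eq_integral_smul, gaussianPDFReal_zero_one]

/-- Closed form for the expected improvement of Bichon et al.: for a Gaussian random
variable `y ~ N(m, σ²)`, threshold `a` and band half-width `δ > 0`, with
`z = (a - m)/σ`, `z⁺ = (a + δ - m)/σ`, `z⁻ = (a - δ - m)/σ`,
`E[max(δ - |y - a|, 0)] = δ(Φ(z⁺) - Φ(z⁻)) - σ(2φ(z) - φ(z⁻) - φ(z⁺))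
  + (m - a)(2Φ(z) - Φ(z⁻) - Φ(z⁺))`. -/
theorem bichon_expected_improvement
    (m σ a δ : ℝ) (hσ : 0 < σ) (hδ : 0 < δ) :
    (∫ y, max (δ - |y - a|) 0 ∂(gaussianReal m (Real.toNNReal (σ ^ 2))))
      = δ * (stdNormalCDF ((a + δ - m) / σ) - stdNormalCDF ((a - δ - m) / σ))
        - σ * (2 * stdNormalPDF ((a - m) / σ) - stdNormalPDF ((a - δ - m) / σ)
                - stdNormalPDF ((a + δ - m) / σ))
        + (m - a) * (2 * stdNormalCDF ((a - m) / σ) - stdNormalCDF ((a - δ - m) / σ)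
                - stdNormalCDF ((a + δ - m) / σ)) := by
  have hscale (u : ℝ) :
      max (δ - |σ * u + m - a|) 0 = σ * max (δ / σ - |u - (a - m) / σ|) 0 := by
    have hcentre : σ * u + m - a = σ * (u - (a - m) / σ) := by field_simp; ring
    rw [hcentre, abs_mul, abs_of_pos hσ, mul_max_of_nonneg _ _ hσ.le, mul_zero, mul_sub,
      mul_div_cancel₀ _ hσ.ne']
  have hplus : (a - m) / σ + δ / σ = (a + δ - m) / σ := by ring
  have hminus : (a - m) / σ - δ / σ = (a - δ - m) / σ := by ring
  rw [gaussianReal_eq_map_stdGaussian, integral_map (by fun_prop) (by fun_prop),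
    integral_stdGaussian]
  simp_rw [hscale, mul_left_comm _ σ, integral_const_mul]
  rw [integral_tent_mul_stdNormalPDF _ _ (div_pos hδ hσ).le, hplus, hminus]
  field_simp
  ring
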